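/- arXiv:1003.4485 — 3 statements merged into one kernel-verified Lean document; each statement's English description precedes it below -/
import Mathlib

section
/- Let M be a smooth manifold, γ : ℝ → M a smooth map, and φ : ℝ → ℝ a smooth map with φ(0) = 0 and φ(1) = 1. Define H : ℝ × ℝ → M by H(s, t) = γ((1 − s)·t + s·φ(t)). Then H is smooth; H(0, t) = γ(t) and H(1, t) = γ(φ(t)) for all t; H(s, 0) = γ(0) and H(s, 1) = γ(1) for all s; and at every point of ℝ × ℝ the derivative (mfderiv) of H has rank at most 1. Hence a smooth path and any smooth reparametrization of it are thinly homotopic relative to endpoints. -/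
open scoped Manifold

/-- a smooth path and any smooth reparametrization of it are
thinly homotopic relative to endpoints.  For a smooth `γ : ℝ → M` and a smooth
`φ : ℝ → ℝ` with `φ(0) = 0`, `φ(1) = 1`, the map
`F(s,t) = γ((1−s)t + sφ(t))` is smooth, satisfies `F(0,t) = γ(t)`,
`F(1,t) = γ(φ(t))`, `F(s,0) = γ(0)`, `F(s,1) = γ(1)`, and its derivative
(`mfderiv`) has rank at most `1` at every point. -/
theorem reparametrization_thin_homotopy {E : Type*} [NormedAddCommGroup E]
    [NormedSpace ℝ E] {H : Type*} [TopologicalSpace H]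
    (I : ModelWithCorners ℝ E H)
    {M : Type*} [TopologicalSpace M] [ChartedSpace H M]
    [IsManifold I (⊤ : ℕ∞) M]
    (γ : ℝ → M) (hγ : ContMDiff 𝓘(ℝ, ℝ) I (⊤ : ℕ∞) γ)
    (φ : ℝ → ℝ) (hφ : ContDiff ℝ (⊤ : ℕ∞) φ) (hφ0 : φ 0 = 0) (hφ1 : φ 1 = 1)
    (F : ℝ × ℝ → M)
    (hF : ∀ p : ℝ × ℝ, F p = γ ((1 - p.1) * p.2 + p.1 * φ p.2)) :
    ContMDiff 𝓘(ℝ, ℝ × ℝ) I (⊤ : ℕ∞) F ∧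
    (∀ t : ℝ, F (0, t) = γ t) ∧
    (∀ t : ℝ, F (1, t) = γ (φ t)) ∧
    (∀ s : ℝ, F (s, 0) = γ 0) ∧
    (∀ s : ℝ, F (s, 1) = γ 1) ∧
    (∀ p : ℝ × ℝ,
      LinearMap.rank (mfderiv 𝓘(ℝ, ℝ × ℝ) I F p).toLinearMap ≤ 1) := by
  set g : ℝ × ℝ → ℝ := fun p => (1 - p.1) * p.2 + p.1 * φ p.2 with hg_def
  have hg : ContDiff ℝ (⊤ : ℕ∞) g := by
    apply ContDiff.add
    · exact (contDiff_const.sub contDiff_fst).mul contDiff_snd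
    · exact contDiff_fst.mul (hφ.comp contDiff_snd)
  have hFe : F = γ ∘ g := funext hF
  have hgC : ContMDiff 𝓘(ℝ, ℝ × ℝ) 𝓘(ℝ, ℝ) (⊤ : ℕ∞) g := (hg.of_le (by simp)).contMDiff
  refine ⟨?_, ?_, ?_, ?_, ?_, ?_⟩
  · rw [hFe]; exact hγ.comp hgC
  · intro t; rw [hF]; norm_num
  · intro t; rw [hF]; norm_num
  · intro s; rw [hF]; simp [hφ0]
  · intro s; rw [hF]; simp [hφ1]
  · intro p
    rw [hFe, mfderiv_comp p (hγ.mdifferentiableAt (by simp)) (hgC.mdifferentiableAt (by simp))]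
    simp only [ContinuousLinearMap.toLinearMap_comp]
    refine le_trans (LinearMap.rank_comp_le_left _ _) ?_
    have h := lift_rank_range_le
      ((mfderiv 𝓘(ℝ, ℝ) I γ (g p)).toLinearMap : ℝ →ₗ[ℝ] TangentSpace I (γ (g p)))
    rw [show Module.rank ℝ (TangentSpace 𝓘(ℝ, ℝ) (g p)) = 1 from Module.rank_self ℝ,
      Cardinal.lift_one, Cardinal.lift_le_one_iff] at h
    exact h
end

section
/- Let M be a smooth manifold and γ : ℝ → M a smooth map that is constant on (−∞, ε] and on [1 − ε, ∞) for some ε ∈ (0, 1/2) (a lazy path). Define c : ℝ → M by c(t) = γ(2t) for t ≤ 1/2 and c(t) = γ(2 − 2t) for t > 1/2 (the composite γ⁻¹γ of γ followed by its reverse). Then c is smooth, and there exists a smooth map H : ℝ × ℝ → M such that H(0, t) = c(t) and H(1, t) = γ(0) for all t, H(s, 0) = H(s, 1) = γ(0) for all s, and at every point the derivative (mfderiv) of H has rank at most 1. In other words, γ⁻¹γ is thinly homotopic to the constant path at γ(0). -/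
open scoped Manifold

/-!
The composite `γ⁻¹γ` is `γ ∘ τ`, where `τ : ℝ → ℝ` is the tent map `t ↦ min (2t) (2 - 2t)`.
Near its kink at `1/2` the tent map only takes values `≥ 1 - ε`, where `γ` is constant, so it
can be replaced there by a smooth interpolation `φ` of its two branches without changing
`γ ∘ φ`. Since `φ 0 = φ 1 = 0`, the homotopy `(s, t) ↦ γ ((1 - s) φ t)` contracts `γ⁻¹γ`
to the constant path at `γ 0`, and it is thin because it factors through `ℝ`.
-/

/-- Equal to the tent map `min (2t) (2 - 2t)` outside `(1/2 - δ, 1/2 + δ)`; inside, a smooth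
convex combination of its two branches. -/
noncomputable def smoothTent (δ t : ℝ) : ℝ :=
  let w := Real.smoothTransition ((1 / 2 + δ - t) / (2 * δ))
  w * (2 * t) + (1 - w) * (2 - 2 * t)

namespace smoothTent

variable {δ : ℝ}

theorem contDiff {n : ℕ∞} : ContDiff ℝ n (smoothTent δ) := by
  have hw : ContDiff ℝ n fun t : ℝ => Real.smoothTransition ((1 / 2 + δ - t) / (2 * δ)) :=
    Real.smoothTransition.contDiff.comp ((contDiff_const.sub contDiff_id).div_const _)
  exact (hw.mul (contDiff_const.mul contDiff_id)).add
    ((contDiff_const.sub hw).mul (contDiff_const.sub (contDiff_const.mul contDiff_id)))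

theorem eq_of_le (hδ : 0 < δ) {t : ℝ} (ht : t ≤ 1 / 2 - δ) : smoothTent δ t = 2 * t := by
  have hw : Real.smoothTransition ((1 / 2 + δ - t) / (2 * δ)) = 1 :=
    Real.smoothTransition.one_of_one_le <| by rw [le_div_iff₀ (by linarith)]; linarith
  simp only [smoothTent, hw]
  ring

theorem eq_of_ge (hδ : 0 < δ) {t : ℝ} (ht : 1 / 2 + δ ≤ t) : smoothTent δ t = 2 - 2 * t := by
  have hw : Real.smoothTransition ((1 / 2 + δ - t) / (2 * δ)) = 0 :=
    Real.smoothTransition.zero_of_nonpos <| div_nonpos_of_nonpos_of_nonneg (by linarith)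
      (by linarith)
  simp only [smoothTent, hw]
  ring

theorem min_le (t : ℝ) : min (2 * t) (2 - 2 * t) ≤ smoothTent δ t := by
  have h0 := Real.smoothTransition.nonneg ((1 / 2 + δ - t) / (2 * δ))
  have h1 := Real.smoothTransition.le_one ((1 / 2 + δ - t) / (2 * δ))
  simp only [smoothTent]
  nlinarith [min_le_left (2 * t) (2 - 2 * t), min_le_right (2 * t) (2 - 2 * t)]

theorem apply_zero (hδ : 0 < δ) (hδ' : δ ≤ 1 / 2) : smoothTent δ 0 = 0 := by
  rw [eq_of_le hδ (by linarith), mul_zero]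

theorem apply_one (hδ : 0 < δ) (hδ' : δ ≤ 1 / 2) : smoothTent δ 1 = 0 := by
  rw [eq_of_ge hδ (by linarith)]
  ring

theorem comp_eq_ite {α : Type*} (hδ : 0 < δ) {γ : ℝ → α} (hγ : ∀ t, 1 - 2 * δ ≤ t → γ t = γ 1)
    (t : ℝ) : γ (smoothTent δ t) = if t ≤ 1 / 2 then γ (2 * t) else γ (2 - 2 * t) := by
  rcases le_or_gt t (1 / 2 - δ) with hlo | hlo
  · rw [if_pos (by linarith), eq_of_le hδ hlo]
  rcases le_or_gt (1 / 2 + δ) t with hhi | hhi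
  · rw [if_neg (by linarith), eq_of_ge hδ hhi]
  have hmin : 1 - 2 * δ ≤ min (2 * t) (2 - 2 * t) := le_min (by linarith) (by linarith)
  rw [hγ _ (hmin.trans (min_le t))]
  split_ifs
  · rw [hγ _ (hmin.trans (min_le_left _ _))]
  · rw [hγ _ (hmin.trans (min_le_right _ _))]

end smoothTent

theorem rank_mfderiv_comp_le_one {E E' H H' M N : Type*}
    [NormedAddCommGroup E] [NormedSpace ℝ E] [TopologicalSpace H] {I : ModelWithCorners ℝ E H}
    [TopologicalSpace M] [ChartedSpace H M]
    [NormedAddCommGroup E'] [NormedSpace ℝ E'] [TopologicalSpace H'] {I' : ModelWithCorners ℝ E' H'}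
    [TopologicalSpace N] [ChartedSpace H' N]
    {g : ℝ → M} {f : N → ℝ} {p : N}
    (hg : MDifferentiableAt 𝓘(ℝ, ℝ) I g (f p)) (hf : MDifferentiableAt I' 𝓘(ℝ, ℝ) f p) :
    LinearMap.rank (mfderiv I' I (g ∘ f) p).toLinearMap ≤ 1 := by
  rw [mfderiv_comp p hg hf, ContinuousLinearMap.toLinearMap_comp]
  have hf1 : LinearMap.rank (mfderiv I' 𝓘(ℝ, ℝ) f p).toLinearMap ≤ 1 :=
    (LinearMap.rank_le_range _).trans_eq (Module.rank_self ℝ)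
  simpa using (LinearMap.lift_rank_comp_le_right _ _).trans (Cardinal.lift_le.mpr hf1)

theorem reverse_comp_thin_homotopic_to_const_general {E : Type*} [NormedAddCommGroup E]
    [NormedSpace ℝ E] {H : Type*} [TopologicalSpace H]
    (I : ModelWithCorners ℝ E H)
    {M : Type*} [TopologicalSpace M] [ChartedSpace H M]
    (γ : ℝ → M) (hγ : ContMDiff 𝓘(ℝ, ℝ) I (⊤ : ℕ∞) γ)
    (ε : ℝ) (hε : ε ∈ Set.Ioo (0 : ℝ) (1 / 2))
    (hγ1 : ∀ t, 1 - ε ≤ t → γ t = γ 1)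
    (c : ℝ → M)
    (hc : ∀ t : ℝ, c t = if t ≤ 1 / 2 then γ (2 * t) else γ (2 - 2 * t)) :
    ContMDiff 𝓘(ℝ, ℝ) I (⊤ : ℕ∞) c ∧
    ∃ F : ℝ × ℝ → M,
      ContMDiff 𝓘(ℝ, ℝ × ℝ) I (⊤ : ℕ∞) F ∧
      (∀ t : ℝ, F (0, t) = c t) ∧
      (∀ t : ℝ, F (1, t) = γ 0) ∧
      (∀ s : ℝ, F (s, 0) = γ 0) ∧
      (∀ s : ℝ, F (s, 1) = γ 0) ∧
      (∀ p : ℝ × ℝ,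
        LinearMap.rank (mfderiv 𝓘(ℝ, ℝ × ℝ) I F p).toLinearMap ≤ 1) := by
  obtain ⟨hε0, hε2⟩ := hε
  have hδ : 0 < ε / 2 := by linarith
  have hc_eq : c = γ ∘ smoothTent (ε / 2) := funext fun t => by
    rw [hc, Function.comp_apply,
      smoothTent.comp_eq_ite hδ (fun t ht => hγ1 t (by linarith)) t]
  set g : ℝ × ℝ → ℝ := fun p => (1 - p.1) * smoothTent (ε / 2) p.2
  have hg : ContDiff ℝ (⊤ : ℕ∞) g :=
    (contDiff_const.sub contDiff_fst).mul (smoothTent.contDiff.comp contDiff_snd)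
  refine ⟨hc_eq ▸ hγ.comp smoothTent.contDiff.contMDiff, γ ∘ g, hγ.comp hg.contMDiff,
    fun t => by simp [g, hc_eq], fun t => by simp [g], fun s => ?_, fun s => ?_, fun p => ?_⟩
  · simp [g, smoothTent.apply_zero hδ (by linarith)]
  · simp [g, smoothTent.apply_one hδ (by linarith)]
  · exact rank_mfderiv_comp_le_one (hγ.mdifferentiableAt (by simp))
      (hg.contMDiff.mdifferentiableAt (by simp))

/-- `γ⁻¹γ` is thinly homotopic to the constant path at `γ(0)`.
If `γ` is a lazy path in a smooth manifold `M`, then the composite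
`c(t) = γ(2t)` for `t ≤ 1/2`, `c(t) = γ(2 − 2t)` for `t > 1/2` is smooth, and
there is a smooth homotopy `F` from `c` to the constant path at `γ(0)`, fixing
the endpoints, whose derivative (`mfderiv`) has rank at most `1` everywhere. -/
theorem reverse_comp_thin_homotopic_to_const {E : Type*} [NormedAddCommGroup E]
    [NormedSpace ℝ E] {H : Type*} [TopologicalSpace H]
    (I : ModelWithCorners ℝ E H)
    {M : Type*} [TopologicalSpace M] [ChartedSpace H M]
    [IsManifold I (⊤ : ℕ∞) M]
    (γ : ℝ → M) (hγ : ContMDiff 𝓘(ℝ, ℝ) I (⊤ : ℕ∞) γ)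
    (ε : ℝ) (hε : ε ∈ Set.Ioo (0 : ℝ) (1 / 2))
    (hγ0 : ∀ t ≤ ε, γ t = γ 0) (hγ1 : ∀ t, 1 - ε ≤ t → γ t = γ 1)
    (c : ℝ → M)
    (hc : ∀ t : ℝ, c t = if t ≤ 1 / 2 then γ (2 * t) else γ (2 - 2 * t)) :
    ContMDiff 𝓘(ℝ, ℝ) I (⊤ : ℕ∞) c ∧
    ∃ F : ℝ × ℝ → M,
      ContMDiff 𝓘(ℝ, ℝ × ℝ) I (⊤ : ℕ∞) F ∧
      (∀ t : ℝ, F (0, t) = c t) ∧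
      (∀ t : ℝ, F (1, t) = γ 0) ∧
      (∀ s : ℝ, F (s, 0) = γ 0) ∧
      (∀ s : ℝ, F (s, 1) = γ 0) ∧
      (∀ p : ℝ × ℝ,
        LinearMap.rank (mfderiv 𝓘(ℝ, ℝ × ℝ) I F p).toLinearMap ≤ 1) :=
  reverse_comp_thin_homotopic_to_const_general I γ hγ ε hε hγ1 c hc
end

section
/- Let M be a smooth manifold and γ : ℝ → M a smooth map. Then there exist a lazy path δ : ℝ → M (smooth and constant on (−∞, ε] and on [1 − ε, ∞) for some ε ∈ (0, 1/2)) with δ(0) = γ(0) and δ(1) = γ(1), and a smooth map H : ℝ × ℝ → M with H(0, t) = γ(t) and H(1, t) = δ(t) for all t, H(s, 0) = γ(0) and H(s, 1) = γ(1) for all s, such that at every point the derivative (mfderiv) of H has rank at most 1. In other words, every smooth path is thinly homotopic, relative to its endpoints, to a lazy path. -/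
open scoped Manifold ContDiff

/-!
Reparametrize `γ` by a smooth map `φ : ℝ → ℝ` that is `0` near `(-∞, 0]`, `1` near `[1, ∞)`;
then `γ ∘ φ` is lazy, and `(s, t) ↦ γ ((1 - s) t + s φ t)` is a homotopy from `γ` to `γ ∘ φ`
fixing the endpoints. It factors through `ℝ`, so its derivative has rank at most `1`.
-/

theorem rank_mfderiv_comp_of_real_le_one
    {E : Type*} [NormedAddCommGroup E] [NormedSpace ℝ E] {H : Type*} [TopologicalSpace H]
    {I : ModelWithCorners ℝ E H} {M : Type*} [TopologicalSpace M] [ChartedSpace H M]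
    {E' : Type*} [NormedAddCommGroup E'] [NormedSpace ℝ E'] {H' : Type*} [TopologicalSpace H']
    {J : ModelWithCorners ℝ E' H'} {N : Type*} [TopologicalSpace N] [ChartedSpace H' N]
    {γ : ℝ → M} {g : N → ℝ} {p : N}
    (hγ : MDifferentiableAt 𝓘(ℝ, ℝ) I γ (g p)) (hg : MDifferentiableAt J 𝓘(ℝ, ℝ) g p) :
    LinearMap.rank (mfderiv J I (γ ∘ g) p).toLinearMap ≤ 1 := by
  rw [mfderiv_comp p hγ hg, ContinuousLinearMap.toLinearMap_comp]
  have h := lift_rank_range_le (mfderiv 𝓘(ℝ, ℝ) I γ (g p)).toLinearMap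
  have h_one : Module.rank ℝ (TangentSpace 𝓘(ℝ, ℝ) (g p)) = 1 := Module.rank_self ℝ
  rw [h_one, Cardinal.lift_one, Cardinal.lift_le_one_iff] at h
  exact (LinearMap.rank_comp_le_left _ _).trans h

noncomputable def lazyReparam (t : ℝ) : ℝ :=
  Real.smoothTransition (2 * t - 1 / 2)

theorem contDiff_lazyReparam : ContDiff ℝ ∞ lazyReparam :=
  Real.smoothTransition.contDiff.comp (by fun_prop)

theorem lazyReparam_of_le {t : ℝ} (ht : t ≤ 1 / 4) : lazyReparam t = 0 :=
  Real.smoothTransition.zero_of_nonpos (by linarith)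

theorem lazyReparam_of_ge {t : ℝ} (ht : 3 / 4 ≤ t) : lazyReparam t = 1 :=
  Real.smoothTransition.one_of_one_le (by linarith)

def reparamHomotopy (φ : ℝ → ℝ) (p : ℝ × ℝ) : ℝ :=
  (1 - p.1) * p.2 + p.1 * φ p.2

theorem contDiff_reparamHomotopy {n : WithTop ℕ∞} {φ : ℝ → ℝ} (hφ : ContDiff ℝ n φ) :
    ContDiff ℝ n (reparamHomotopy φ) := by
  unfold reparamHomotopy
  fun_prop

@[simp]
theorem reparamHomotopy_zero_left (φ : ℝ → ℝ) (t : ℝ) : reparamHomotopy φ (0, t) = t := by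
  simp [reparamHomotopy]

@[simp]
theorem reparamHomotopy_one_left (φ : ℝ → ℝ) (t : ℝ) : reparamHomotopy φ (1, t) = φ t := by
  simp [reparamHomotopy]

theorem reparamHomotopy_of_apply_eq {φ : ℝ → ℝ} {t : ℝ} (ht : φ t = t) (s : ℝ) :
    reparamHomotopy φ (s, t) = t := by
  simp only [reparamHomotopy, ht]
  ring

theorem smooth_path_thinly_homotopic_to_lazy_general {E : Type*} [NormedAddCommGroup E]
    [NormedSpace ℝ E] {H : Type*} [TopologicalSpace H]
    (I : ModelWithCorners ℝ E H)
    {M : Type*} [TopologicalSpace M] [ChartedSpace H M]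
    (γ : ℝ → M) (hγ : ContMDiff 𝓘(ℝ, ℝ) I (⊤ : ℕ∞) γ) :
    ∃ ε ∈ Set.Ioo (0 : ℝ) (1 / 2), ∃ δ : ℝ → M,
      ContMDiff 𝓘(ℝ, ℝ) I (⊤ : ℕ∞) δ ∧
      (∀ t ≤ ε, δ t = δ 0) ∧ (∀ t, 1 - ε ≤ t → δ t = δ 1) ∧
      δ 0 = γ 0 ∧ δ 1 = γ 1 ∧
      ∃ F : ℝ × ℝ → M,
        ContMDiff 𝓘(ℝ, ℝ × ℝ) I (⊤ : ℕ∞) F ∧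
        (∀ t : ℝ, F (0, t) = γ t) ∧
        (∀ t : ℝ, F (1, t) = δ t) ∧
        (∀ s : ℝ, F (s, 0) = γ 0) ∧
        (∀ s : ℝ, F (s, 1) = γ 1) ∧
        (∀ p : ℝ × ℝ,
          LinearMap.rank (mfderiv 𝓘(ℝ, ℝ × ℝ) I F p).toLinearMap ≤ 1) := by
  have hφ0 : lazyReparam 0 = 0 := lazyReparam_of_le (by norm_num)
  have hφ1 : lazyReparam 1 = 1 := lazyReparam_of_ge (by norm_num)
  have hG : ContDiff ℝ ∞ (reparamHomotopy lazyReparam) :=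
    contDiff_reparamHomotopy contDiff_lazyReparam
  refine ⟨1 / 4, by norm_num, γ ∘ lazyReparam, hγ.comp contDiff_lazyReparam.contMDiff,
    fun t ht => ?_, fun t ht => ?_, by simp [hφ0], by simp [hφ1],
    γ ∘ reparamHomotopy lazyReparam, hγ.comp hG.contMDiff, by simp, by simp,
    fun s => by simp [reparamHomotopy_of_apply_eq hφ0],
    fun s => by simp [reparamHomotopy_of_apply_eq hφ1],
    fun p => rank_mfderiv_comp_of_real_le_one (hγ.mdifferentiableAt (by simp))
      (hG.contMDiff.mdifferentiableAt (by simp))⟩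
  · simp [lazyReparam_of_le ht, hφ0]
  · simp [lazyReparam_of_ge (by linarith : (3 : ℝ) / 4 ≤ t), hφ1]

/-- every smooth path is thinly homotopic, relative to its
endpoints, to a lazy path: for every smooth `γ : ℝ → M` there exist
`ε ∈ (0, 1/2)`, a smooth `δ : ℝ → M` constant on `(−∞, ε]` and on
`[1 − ε, ∞)` with the same endpoints as `γ`, and a smooth homotopy `F` from
`γ` to `δ` fixing the endpoints whose derivative (`mfderiv`) has rank at most
`1` at every point. -/
theorem smooth_path_thinly_homotopic_to_lazy {E : Type*} [NormedAddCommGroup E]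
    [NormedSpace ℝ E] {H : Type*} [TopologicalSpace H]
    (I : ModelWithCorners ℝ E H)
    {M : Type*} [TopologicalSpace M] [ChartedSpace H M]
    [IsManifold I (⊤ : ℕ∞) M]
    (γ : ℝ → M) (hγ : ContMDiff 𝓘(ℝ, ℝ) I (⊤ : ℕ∞) γ) :
    ∃ ε ∈ Set.Ioo (0 : ℝ) (1 / 2), ∃ δ : ℝ → M,
      ContMDiff 𝓘(ℝ, ℝ) I (⊤ : ℕ∞) δ ∧
      (∀ t ≤ ε, δ t = δ 0) ∧ (∀ t, 1 - ε ≤ t → δ t = δ 1) ∧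
      δ 0 = γ 0 ∧ δ 1 = γ 1 ∧
      ∃ F : ℝ × ℝ → M,
        ContMDiff 𝓘(ℝ, ℝ × ℝ) I (⊤ : ℕ∞) F ∧
        (∀ t : ℝ, F (0, t) = γ t) ∧
        (∀ t : ℝ, F (1, t) = δ t) ∧
        (∀ s : ℝ, F (s, 0) = γ 0) ∧
        (∀ s : ℝ, F (s, 1) = γ 1) ∧
        (∀ p : ℝ × ℝ,
          LinearMap.rank (mfderiv 𝓘(ℝ, ℝ × ℝ) I F p).toLinearMap ≤ 1) :=
  smooth_path_thinly_homotopic_to_lazy_general I γ hγ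
end
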